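/- arXiv:1603.05565 — 2 statements merged into one kernel-verified Lean document; each statement's English description precedes it below -/
import Mathlib

section
/- Let h : [r, R₀] → ℝ be a non-negative bounded function, 0 < ϑ < 1, A, B ≥ 0 and β > 0. Assume that h(s) ≤ ϑ h(t) + A/(t-s)^β + B for all r ≤ s < t ≤ R₀. Then there exists a constant c = c(ϑ, β) > 0 such that h(r) ≤ c A/(R₀ - r)^β + c B. -/
open Set

set_option maxHeartbeats 1000000 in
/-- Iteration lemma (hole-filling): if `h` is nonnegative and bounded on `[r, R₀]` and
satisfies `h s ≤ ϑ h t + A/(t-s)^β + B` for all `r ≤ s < t ≤ R₀`, then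
`h r ≤ c A/(R₀-r)^β + c B` for a constant `c = c(ϑ, β) > 0`. -/
theorem iteration_lemma (ϑ β : ℝ) (hϑ0 : 0 < ϑ) (hϑ1 : ϑ < 1) (hβ : 0 < β) :
    ∃ c : ℝ, 0 < c ∧
      ∀ (r R₀ : ℝ), r < R₀ → ∀ (h : ℝ → ℝ) (A B : ℝ), 0 ≤ A → 0 ≤ B →
        (∀ t ∈ Icc r R₀, 0 ≤ h t) →
        (∃ M : ℝ, ∀ t ∈ Icc r R₀, h t ≤ M) →
        (∀ s t : ℝ, r ≤ s → s < t → t ≤ R₀ → h s ≤ ϑ * h t + A / (t - s) ^ β + B) →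
        h r ≤ c * A / (R₀ - r) ^ β + c * B := by
  set μ : ℝ := ϑ ^ (1/β) with hμdef
  have hμ0 : 0 < μ := Real.rpow_pos_of_pos hϑ0 _
  have hμ1 : μ < 1 := Real.rpow_lt_one hϑ0.le hϑ1 (by positivity)
  set l : ℝ := (1 + μ) / 2 with hldef
  have hl0 : 0 < l := by positivity
  have hμl : μ < l := by rw [hldef]; linarith
  have hl1 : l < 1 := by rw [hldef]; linarith
  have hlβ0 : 0 < l ^ β := Real.rpow_pos_of_pos hl0 _
  have hϑlβ : ϑ < l ^ β := by
    have h1 : μ ^ β < l ^ β := Real.rpow_lt_rpow hμ0.le hμl hβ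
    have h2 : μ ^ β = ϑ := by
      rw [hμdef, ← Real.rpow_mul hϑ0.le, one_div_mul_cancel hβ.ne', Real.rpow_one]
    linarith
  have hlβ1 : l ^ β < 1 := Real.rpow_lt_one hl0.le hl1 hβ
  set q : ℝ := ϑ / l ^ β with hqdef
  have hq0 : 0 < q := by positivity
  have hq1 : q < 1 := (div_lt_one hlβ0).2 hϑlβ
  have hϑq : ϑ ≤ q := by
    rw [hqdef]
    rw [le_div_iff₀ hlβ0]
    nlinarith
  have h1l0 : 0 < 1 - l := by linarith
  have h1lβ0 : 0 < (1 - l) ^ β := Real.rpow_pos_of_pos h1l0 _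
  have h1lβ1 : (1 - l) ^ β ≤ 1 := Real.rpow_le_one h1l0.le (by linarith) hβ.le
  have h1q0 : 0 < 1 - q := by linarith
  refine ⟨1 / ((1 - l) ^ β * (1 - q)), div_pos one_pos (mul_pos h1lβ0 h1q0), ?_⟩
  intro r R₀ hrR h A B hA hB hpos ⟨M, hM⟩ hiter
  set c : ℝ := 1 / ((1 - l) ^ β * (1 - q)) with hcdef
  have hd0 : 0 < R₀ - r := by linarith
  set d : ℝ := R₀ - r with hddef
  set t : ℕ → ℝ := fun k => R₀ - l ^ k * d with htdef
  have ht_mem : ∀ k, t k ∈ Icc r R₀ := by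
    intro k
    have h1 : l ^ k ≤ 1 := pow_le_one₀ hl0.le hl1.le
    have h2 : 0 < l ^ k := pow_pos hl0 k
    constructor
    · simp only [htdef]; nlinarith
    · simp only [htdef]; nlinarith
  have ht_lt : ∀ k, t k < t (k+1) := by
    intro k
    have : l ^ (k+1) < l ^ k := by
      have := pow_pos hl0 k
      calc l ^ (k+1) = l ^ k * l := by ring
        _ < l ^ k * 1 := by nlinarith
        _ = l ^ k := by ring
    simp only [htdef]
    nlinarith
  have ht_diff : ∀ k, t (k+1) - t k = l ^ k * ((1 - l) * d) := by
    intro k; simp only [htdef]; ring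
  set D : ℝ := ((1 - l) * d) ^ β with hDdef
  have hD0 : 0 < D := Real.rpow_pos_of_pos (by positivity) _
  -- key: (l^k * ((1-l)*d))^β = (l^β)^k * D
  have hpowβ : ∀ k : ℕ, (l ^ k * ((1 - l) * d)) ^ β = (l ^ β) ^ k * D := by
    intro k
    rw [Real.mul_rpow (by positivity) (by positivity), hDdef]
    congr 1
    rw [← Real.rpow_natCast l k, ← Real.rpow_mul hl0.le, mul_comm (k:ℝ) β,
      Real.rpow_mul hl0.le, Real.rpow_natCast]
  -- main induction
  have key : ∀ k : ℕ, h r ≤ ϑ ^ k * h (t k) + (A / D + B) * ∑ i ∈ Finset.range k, q ^ i := by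
    intro k
    induction k with
    | zero => simp [htdef, hddef]
    | succ k ih =>
      have hstep : h (t k) ≤ ϑ * h (t (k+1)) + A / (t (k+1) - t k) ^ β + B :=
        hiter _ _ (ht_mem k).1 (ht_lt k) (ht_mem (k+1)).2
      have hmul : ϑ ^ k * h (t k) ≤ ϑ ^ k * (ϑ * h (t (k+1)) + A / (t (k+1) - t k) ^ β + B) :=
        mul_le_mul_of_nonneg_left hstep (by positivity)
      have hden : (t (k+1) - t k) ^ β = (l ^ β) ^ k * D := by rw [ht_diff k, hpowβ k]
      have hAterm : ϑ ^ k * (A / (t (k+1) - t k) ^ β) = q ^ k * (A / D) := by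
        have hne1 : ((l ^ β) ^ k) ≠ 0 := by positivity
        rw [hden, hqdef, div_pow]
        field_simp
      have hBterm : ϑ ^ k * B ≤ q ^ k * B := by
        have h5 : ϑ ^ k ≤ q ^ k := pow_le_pow_left₀ hϑ0.le hϑq k
        exact mul_le_mul_of_nonneg_right h5 hB
      have hsum : ∑ i ∈ Finset.range (k+1), q ^ i = (∑ i ∈ Finset.range k, q ^ i) + q ^ k := by
        rw [Finset.sum_range_succ]
      calc h r ≤ ϑ ^ k * h (t k) + (A / D + B) * ∑ i ∈ Finset.range k, q ^ i := ih
        _ ≤ ϑ ^ k * (ϑ * h (t (k+1)) + A / (t (k+1) - t k) ^ β + B)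
              + (A / D + B) * ∑ i ∈ Finset.range k, q ^ i := by linarith
        _ = ϑ ^ (k+1) * h (t (k+1)) + ϑ ^ k * (A / (t (k+1) - t k) ^ β) + ϑ ^ k * B
              + (A / D + B) * ∑ i ∈ Finset.range k, q ^ i := by ring
        _ ≤ ϑ ^ (k+1) * h (t (k+1)) + q ^ k * (A / D) + q ^ k * B
              + (A / D + B) * ∑ i ∈ Finset.range k, q ^ i := by rw [hAterm]; linarith
        _ = ϑ ^ (k+1) * h (t (k+1)) + (A / D + B) * ∑ i ∈ Finset.range (k+1), q ^ i := by
              rw [hsum]; ring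
  -- bound with M and geometric series
  have hgeom : ∀ k : ℕ, ∑ i ∈ Finset.range k, q ^ i ≤ (1 - q)⁻¹ := by
    intro k
    have h1 : ∑ i ∈ Finset.range k, q ^ i = (1 - q ^ k) / (1 - q) := by
      rw [geom_sum_eq hq1.ne, div_eq_div_iff (by linarith) (by linarith)]; ring
    rw [h1, div_le_iff₀ h1q0, inv_mul_cancel₀ h1q0.ne']
    linarith [pow_nonneg hq0.le k]
  have hCpos : 0 ≤ A / D + B := by positivity
  have hbound : ∀ k : ℕ, h r ≤ ϑ ^ k * M + (A / D + B) * (1 - q)⁻¹ := by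
    intro k
    have h1 := key k
    have h2 : h (t k) ≤ M := hM _ (ht_mem k)
    have h3 : (A / D + B) * ∑ i ∈ Finset.range k, q ^ i ≤ (A / D + B) * (1 - q)⁻¹ :=
      mul_le_mul_of_nonneg_left (hgeom k) hCpos
    have h4 : ϑ ^ k * h (t k) ≤ ϑ ^ k * M := mul_le_mul_of_nonneg_left h2 (by positivity)
    linarith
  have hlim : Filter.Tendsto (fun k : ℕ => ϑ ^ k * M + (A / D + B) * (1 - q)⁻¹)
      Filter.atTop (nhds ((A / D + B) * (1 - q)⁻¹)) := by
    have h0 : Filter.Tendsto (fun k : ℕ => ϑ ^ k) Filter.atTop (nhds 0) :=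
      tendsto_pow_atTop_nhds_zero_of_lt_one hϑ0.le hϑ1
    have h6 := (h0.mul_const M).add_const ((A / D + B) * (1 - q)⁻¹)
    rw [zero_mul, zero_add] at h6
    exact h6
  have hS : h r ≤ (A / D + B) * (1 - q)⁻¹ := ge_of_tendsto' hlim hbound
  -- final arithmetic
  have hDeq : D = (1 - l) ^ β * d ^ β := Real.mul_rpow h1l0.le hd0.le
  have hdβ0 : 0 < d ^ β := Real.rpow_pos_of_pos hd0 _
  have h1q0 : 0 < 1 - q := by linarith
  have hfirst : A / D * (1 - q)⁻¹ = c * A / d ^ β := by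
    rw [hDeq, hcdef]
    field_simp [h1lβ0.ne', hdβ0.ne', h1q0.ne']
  have hc_ge : (1 - q)⁻¹ ≤ c := by
    have h8 : (1 - l) ^ β * (1 - q) ≤ 1 - q := mul_le_of_le_one_left h1q0.le h1lβ1
    have h9 := one_div_le_one_div_of_le (mul_pos h1lβ0 h1q0) h8
    rw [hcdef]
    calc (1 - q)⁻¹ = 1 / (1 - q) := (one_div (1 - q)).symm
      _ ≤ 1 / ((1 - l) ^ β * (1 - q)) := h9
  have hsecond : B * (1 - q)⁻¹ ≤ c * B := by
    rw [mul_comm c B]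
    exact mul_le_mul_of_nonneg_left hc_ge hB
  calc h r ≤ (A / D + B) * (1 - q)⁻¹ := hS
    _ = A / D * (1 - q)⁻¹ + B * (1 - q)⁻¹ := by ring
    _ ≤ c * A / d ^ β + c * B := by rw [hfirst]; linarith
end

section
/- Let 0 < α < 1, n ≥ 1, 1 ≤ q < ∞, and let (g_k)_{k∈ℤ} be a sequence of non-negative functions in L^{n/α}(B) on a ball B, and for x ∈ B let A_k(x) = {y : 2^{-k} ≤ |x-y| < 2^{-k+1}}. Then (1/|B|²) ∑_k ∫_B ∫_{B ∩ A_k(x)} (g_k(x) + g_k(y)) |x-y|^α dy dx ≤ C(n, α, q) (∑_k ‖g_k‖_{L^{n/α}(B)}^q)^{1/q}. -/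
open MeasureTheory Metric Set ENNReal

noncomputable section

private lemma holder_one {X : Type*} [MeasurableSpace X] (μ : Measure X)
    {p p' : ℝ} (hpq : p.HolderConjugate p') {f : X → ℝ≥0∞} (hf : AEMeasurable f μ) :
    ∫⁻ x, f x ∂μ ≤ (∫⁻ x, f x ^ p ∂μ) ^ (1/p) * (μ univ) ^ (1/p') := by
  have := ENNReal.lintegral_mul_le_Lp_mul_Lq μ hpq hf (aemeasurable_const (b := (1:ℝ≥0∞)))
  simpa using this

/-- ℓ^q(L^{n/α}) Hajlasz-type estimate over dyadic annuli `A_k(x)`: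
`(1/|B|²) ∑_k ∫_B ∫_{B ∩ A_k(x)} (g_k(x)+g_k(y))|x-y|^α dy dx
  ≤ C(n,α,q) (∑_k ‖g_k‖_{L^{n/α}(B)}^q)^{1/q}`. -/
theorem hajlasz_vmo_estimate (n : ℕ) (hn : 1 ≤ n) (α q : ℝ)
    (hα0 : 0 < α) (hα1 : α < 1) (hq : 1 ≤ q) :
    ∃ C : ℝ, 0 < C ∧
      ∀ (x₀ : EuclideanSpace ℝ (Fin n)) (r : ℝ), 0 < r →
        ∀ g : ℤ → EuclideanSpace ℝ (Fin n) → ℝ,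
          (∀ k, Measurable (g k)) → (∀ k x, 0 ≤ g k x) →
          (∑' k : ℤ, ∫⁻ x in ball x₀ r,
              ∫⁻ y in ball x₀ r ∩ {y : EuclideanSpace ℝ (Fin n) |
                  (2 : ℝ) ^ (-k) ≤ dist x y ∧ dist x y < (2 : ℝ) ^ (-k + 1)},
                ENNReal.ofReal ((g k x + g k y) * ‖x - y‖ ^ α))
            / (volume (ball x₀ r)) ^ 2
          ≤ ENNReal.ofReal C *
            (∑' k : ℤ, ((∫⁻ x in ball x₀ r,
                ENNReal.ofReal (g k x ^ ((n : ℝ) / α))) ^ (α / (n : ℝ))) ^ q) ^ (1 / q) := by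
  have hN0 : (0:ℝ) < n := by exact_mod_cast Nat.pos_of_ne_zero (by omega)
  have hN1 : (1:ℝ) ≤ n := by exact_mod_cast hn
  set p : ℝ := (n:ℝ) / α with hp_def
  have hp1 : 1 < p := by
    rw [hp_def, lt_div_iff₀ hα0, one_mul]; exact hα1.trans_le hN1
  have hαN : α / n = 1 / p := by rw [hp_def, one_div_div]
  set V : ℝ≥0∞ := volume (ball (0 : EuclideanSpace ℝ (Fin n)) 1) with hV_def
  have hV0 : V ≠ 0 := (measure_ball_pos volume 0 one_pos).ne'
  have hVt : V ≠ ⊤ := measure_ball_lt_top.ne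
  have hVtR : 0 < V.toReal := ENNReal.toReal_pos hV0 hVt
  have h2α1 : (2:ℝ) ^ (-α) < 1 :=
    Real.rpow_lt_one_of_one_lt_of_neg one_lt_two (neg_neg_iff_pos.mpr hα0)
  have h2α0 : (0:ℝ) < 1 - 2 ^ (-α) := by linarith
  set Ve : ℝ := V.toReal ^ (-(α / (n:ℝ))) with hVe_def
  have hVe0 : 0 < Ve := Real.rpow_pos_of_pos hVtR _
  refine ⟨2 ^ (2*α+1) * Ve / (1 - 2 ^ (-α)), by positivity, ?_⟩
  intro x₀ r hr g hgm hg0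
  set B := ball x₀ r with hB_def
  set μB := volume B with hμB_def
  have hB0 : μB ≠ 0 := (measure_ball_pos volume x₀ hr).ne'
  have hBt : μB ≠ ⊤ := measure_ball_lt_top.ne
  set J : ℤ → ℝ≥0∞ := fun k => ∫⁻ x in B, ENNReal.ofReal (g k x ^ p) with hJ_def
  set a : ℤ → ℝ≥0∞ := fun k => (J k) ^ (α / (n:ℝ)) with ha_def
  set S : ℝ≥0∞ := (∑' k : ℤ, a k ^ q) ^ (1/q) with hS_def
  set I : ℤ → ℝ≥0∞ := fun k => ∫⁻ x in B, ENNReal.ofReal (g k x) with hI_def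
  have hq0 : (0:ℝ) < q := lt_of_lt_of_le one_pos hq
  -- each `a k` is at most `S`
  have haS : ∀ k, a k ≤ S := by
    intro k
    have h1 : a k ^ q ≤ ∑' j : ℤ, a j ^ q := ENNReal.le_tsum k
    calc a k = (a k ^ q) ^ (1/q) := by
          rw [← ENNReal.rpow_mul, mul_one_div, div_self hq0.ne', ENNReal.rpow_one]
      _ ≤ S := ENNReal.rpow_le_rpow h1 (by positivity)
  -- Hölder's inequality in the space variable
  have hIa : ∀ k, I k ≤ a k * μB ^ ((1:ℝ) - α/(n:ℝ)) := by
    intro k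
    have hpc : p.HolderConjugate (Real.conjExponent p) := Real.HolderConjugate.conjExponent hp1
    have h := holder_one (volume.restrict B) hpc
      (f := fun x => ENNReal.ofReal (g k x)) ((hgm k).ennreal_ofReal.aemeasurable)
    rw [Measure.restrict_apply_univ] at h
    have hrw : ∀ x, (ENNReal.ofReal (g k x)) ^ p = ENNReal.ofReal (g k x ^ p) := fun x =>
      ENNReal.ofReal_rpow_of_nonneg (hg0 k x) (le_of_lt (lt_trans one_pos hp1))
    simp only [hrw] at h
    have h1p : 1/(Real.conjExponent p) = 1 - α/(n:ℝ) := by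
      have h2 := hpc.one_sub_inv
      rw [hαN, one_div, one_div, ← h2]
    rw [h1p, ← hαN] at h
    exact h
  -- the weight sequence
  set w : ℤ → ℝ≥0∞ := fun k =>
    if (2:ℝ)^(-k) < 2*r then ENNReal.ofReal (((2:ℝ)^(-k+1) : ℝ) ^ α) else 0 with hw_def
  -- bound on each term of the sum
  have hT : ∀ k : ℤ, (∫⁻ x in B,
      ∫⁻ y in B ∩ {y : EuclideanSpace ℝ (Fin n) |
          (2 : ℝ) ^ (-k) ≤ dist x y ∧ dist x y < (2 : ℝ) ^ (-k + 1)},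
        ENNReal.ofReal ((g k x + g k y) * ‖x - y‖ ^ α))
      ≤ w k * (2 * (S * μB ^ ((2:ℝ) - α/(n:ℝ)))) := by
    intro k
    by_cases h : (2:ℝ)^(-k) < 2*r
    · -- main case
      set c : ℝ := ((2:ℝ)^(-k+1) : ℝ) ^ α with hc_def
      have hc0 : (0:ℝ) ≤ c := Real.rpow_nonneg (by positivity) _
      have hin : ∀ x : EuclideanSpace ℝ (Fin n),
          (∫⁻ y in B ∩ {y : EuclideanSpace ℝ (Fin n) |
              (2:ℝ)^(-k) ≤ dist x y ∧ dist x y < (2:ℝ)^(-k+1)},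
            ENNReal.ofReal ((g k x + g k y) * ‖x - y‖ ^ α))
          ≤ ENNReal.ofReal c * (ENNReal.ofReal (g k x) * μB + I k) := by
        intro x
        set s := B ∩ {y : EuclideanSpace ℝ (Fin n) |
            (2:ℝ)^(-k) ≤ dist x y ∧ dist x y < (2:ℝ)^(-k+1)} with hs_def
        have hsm : MeasurableSet s := by
          have hseq : s = B ∩ ((ball x ((2:ℝ)^(-k)))ᶜ ∩ ball x ((2:ℝ)^(-k+1))) := by
            ext y
            simp [hs_def, mem_ball, dist_comm y x, not_lt, and_assoc]
          rw [hseq]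
          exact measurableSet_ball.inter (measurableSet_ball.compl.inter measurableSet_ball)
        have hsub : s ⊆ B := inter_subset_left
        calc (∫⁻ y in s, ENNReal.ofReal ((g k x + g k y) * ‖x - y‖ ^ α))
            ≤ ∫⁻ y in s, ENNReal.ofReal c * (ENNReal.ofReal (g k x) + ENNReal.ofReal (g k y)) := by
              apply setLIntegral_mono' hsm
              intro y hy
              have hd : dist x y < (2:ℝ)^(-k+1) := hy.2.2
              have h1 : ‖x - y‖ ^ α ≤ c := by
                rw [← dist_eq_norm]
                exact Real.rpow_le_rpow dist_nonneg hd.le hα0.le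
              have h2 : (g k x + g k y) * ‖x - y‖ ^ α ≤ c * (g k x + g k y) := by
                rw [mul_comm]
                exact mul_le_mul_of_nonneg_right h1 (add_nonneg (hg0 k x) (hg0 k y))
              calc ENNReal.ofReal ((g k x + g k y) * ‖x - y‖ ^ α)
                  ≤ ENNReal.ofReal (c * (g k x + g k y)) := ENNReal.ofReal_le_ofReal h2
                _ = ENNReal.ofReal c * (ENNReal.ofReal (g k x) + ENNReal.ofReal (g k y)) := by
                    rw [ENNReal.ofReal_mul hc0, ENNReal.ofReal_add (hg0 k x) (hg0 k y)]
          _ = ENNReal.ofReal c *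
                ∫⁻ y in s, (ENNReal.ofReal (g k x) + ENNReal.ofReal (g k y)) :=
              lintegral_const_mul' _ _ ENNReal.ofReal_ne_top
          _ = ENNReal.ofReal c * (ENNReal.ofReal (g k x) * volume s
                + ∫⁻ y in s, ENNReal.ofReal (g k y)) := by
              rw [lintegral_add_left measurable_const, setLIntegral_const]
          _ ≤ ENNReal.ofReal c * (ENNReal.ofReal (g k x) * μB + I k) := by
              gcongr
              · exact measure_mono hsub
              · exact lintegral_mono_set hsub
      have hI2 : I k ≤ S * μB ^ ((1:ℝ) - α/(n:ℝ)) :=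
        (hIa k).trans (mul_le_mul_left (haS k) _)
      have hwk : w k = ENNReal.ofReal c := by simp only [hw_def]; exact if_pos h
      calc (∫⁻ x in B,
          ∫⁻ y in B ∩ {y : EuclideanSpace ℝ (Fin n) |
              (2 : ℝ) ^ (-k) ≤ dist x y ∧ dist x y < (2 : ℝ) ^ (-k + 1)},
            ENNReal.ofReal ((g k x + g k y) * ‖x - y‖ ^ α))
          ≤ ∫⁻ x in B, ENNReal.ofReal c * (ENNReal.ofReal (g k x) * μB + I k) :=
            lintegral_mono fun x => hin x
        _ = ENNReal.ofReal c * ∫⁻ x in B, (ENNReal.ofReal (g k x) * μB + I k) :=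
            lintegral_const_mul' _ _ ENNReal.ofReal_ne_top
        _ = ENNReal.ofReal c * (I k * μB + I k * μB) := by
            rw [lintegral_add_right _ measurable_const, setLIntegral_const,
              lintegral_mul_const' _ _ hBt]
        _ = ENNReal.ofReal c * (2 * (I k * μB)) := by ring
        _ ≤ ENNReal.ofReal c * (2 * ((S * μB ^ ((1:ℝ) - α/(n:ℝ))) * μB)) := by
            gcongr
        _ = w k * (2 * (S * μB ^ ((2:ℝ) - α/(n:ℝ)))) := by
            rw [hwk]
            congr 2
            rw [mul_assoc]
            congr 1
            calc μB ^ ((1:ℝ) - α/(n:ℝ)) * μB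
                = μB ^ ((1:ℝ) - α/(n:ℝ)) * μB ^ (1:ℝ) := by rw [ENNReal.rpow_one]
              _ = μB ^ ((2:ℝ) - α/(n:ℝ)) := by
                  rw [← ENNReal.rpow_add _ _ hB0 hBt]; congr 1; ring
    · -- empty annulus case
      have hwk : w k = 0 := by simp only [hw_def]; exact if_neg h
      rw [hwk, zero_mul]
      have hempty : ∀ x ∈ B, B ∩ {y : EuclideanSpace ℝ (Fin n) |
          (2:ℝ)^(-k) ≤ dist x y ∧ dist x y < (2:ℝ)^(-k+1)} = ∅ := by
        intro x hx
        ext y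
        simp only [mem_inter_iff, mem_setOf_eq, mem_empty_iff_false, iff_false, not_and]
        intro hyB h1
        exfalso
        have hx' := mem_ball.mp hx
        have hy' := mem_ball.mp hyB
        have hd : dist x y ≤ dist x x₀ + dist x₀ y := dist_triangle _ _ _
        rw [dist_comm x₀ y] at hd
        linarith [not_lt.mp h]
      have hz : ∀ x ∈ B, (∫⁻ y in B ∩ {y : EuclideanSpace ℝ (Fin n) |
          (2:ℝ)^(-k) ≤ dist x y ∧ dist x y < (2:ℝ)^(-k+1)},
            ENNReal.ofReal ((g k x + g k y) * ‖x - y‖ ^ α)) = 0 := by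
        intro x hx
        rw [hempty x hx]
        simp
      calc (∫⁻ x in B,
          ∫⁻ y in B ∩ {y : EuclideanSpace ℝ (Fin n) |
              (2 : ℝ) ^ (-k) ≤ dist x y ∧ dist x y < (2 : ℝ) ^ (-k + 1)},
            ENNReal.ofReal ((g k x + g k y) * ‖x - y‖ ^ α))
          ≤ ∫⁻ _x in B, 0 := setLIntegral_mono' measurableSet_ball (fun x hx => (hz x hx).le)
        _ = 0 := by simp
  -- geometric bound on the weights
  have hW : ∑' k : ℤ, w k ≤ ENNReal.ofReal ((2:ℝ)^α * (2*r)^α / (1 - 2^(-α))) := by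
    have h2r : (0:ℝ) < 2*r := by linarith
    set m : ℤ := -⌊Real.logb 2 (2*r)⌋ with hm_def
    have hm1 : (2:ℝ)^(-m) ≤ 2*r := by
      have h1 : ((-m : ℤ):ℝ) ≤ Real.logb 2 (2*r) := by
        rw [hm_def]; push_cast; rw [neg_neg]; exact Int.floor_le _
      calc (2:ℝ)^(-m) = (2:ℝ)^(((-m:ℤ)):ℝ) := by rw [Real.rpow_intCast]
        _ ≤ (2:ℝ)^(Real.logb 2 (2*r)) := Real.rpow_le_rpow_of_exponent_le one_le_two h1
        _ = 2*r := Real.rpow_logb two_pos (by norm_num) h2r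
    have hm2 : ∀ k : ℤ, (2:ℝ)^(-k) < 2*r → m ≤ k := by
      intro k hk
      have h1 : ((-k:ℤ):ℝ) < Real.logb 2 (2*r) := by
        have h2 : (2:ℝ)^(((-k:ℤ)):ℝ) < (2:ℝ)^(Real.logb 2 (2*r)) := by
          rw [Real.rpow_intCast, Real.rpow_logb two_pos (by norm_num) h2r]; exact hk
        exact (Real.rpow_lt_rpow_left_iff one_lt_two).mp h2
      have h3 : (-k:ℤ) ≤ ⌊Real.logb 2 (2*r)⌋ := Int.le_floor.mpr h1.le
      omega
    have hsupp : Function.support w ⊆ Set.range (fun j : ℕ => m + (j:ℤ)) := by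
      intro k hk
      rw [Function.mem_support] at hk
      by_cases h : (2:ℝ)^(-k) < 2*r
      · have := hm2 k h
        exact ⟨(k - m).toNat, by simp; omega⟩
      · exact absurd (by simp only [hw_def]; exact if_neg h) hk
    have hinj : Function.Injective (fun j : ℕ => m + (j:ℤ)) := by
      intro a b hab; simp only at hab; omega
    rw [← hinj.tsum_eq hsupp]
    have hterm : ∀ j : ℕ, w (m + (j:ℤ)) ≤
        ENNReal.ofReal ((2:ℝ)^α * (2*r)^α) * (ENNReal.ofReal ((2:ℝ)^(-α)))^j := by
      intro j
      rw [hw_def]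
      simp only
      split_ifs with h
      · have hbase : ((2:ℝ)^(-(m + (j:ℤ)) + 1) : ℝ) = 2 * ((2:ℝ)^(-m)) * ((2:ℝ)^(-(j:ℤ))) := by
          rw [show -(m + (j:ℤ)) + 1 = 1 + (-m) + (-(j:ℤ)) by ring, zpow_add₀ (two_ne_zero),
            zpow_add₀ (two_ne_zero), zpow_one]
        rw [hbase]
        have e1 : (2 * (2:ℝ)^(-m) * (2:ℝ)^(-(j:ℤ))) ^ α
            = 2^α * ((2:ℝ)^(-m))^α * ((2:ℝ)^(-(j:ℤ)))^α := by
          rw [Real.mul_rpow (by positivity) (by positivity),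
            Real.mul_rpow (by positivity) (by positivity)]
        have e2 : ((2:ℝ)^(-(j:ℤ)))^α = ((2:ℝ)^(-α))^j := by
          rw [← Real.rpow_intCast (2:ℝ) (-(j:ℤ)), ← Real.rpow_mul (by norm_num : (0:ℝ) ≤ 2),
            ← Real.rpow_natCast ((2:ℝ)^(-α)) j, ← Real.rpow_mul (by norm_num : (0:ℝ) ≤ 2)]
          congr 1
          push_cast
          ring
        rw [e1, e2]
        have hle : (2:ℝ)^α * ((2:ℝ)^(-m))^α * ((2:ℝ)^(-α))^j
            ≤ ((2:ℝ)^α * (2*r)^α) * ((2:ℝ)^(-α))^j := by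
          have hmono : ((2:ℝ)^(-m))^α ≤ (2*r)^α :=
            Real.rpow_le_rpow (by positivity) hm1 hα0.le
          have hnn : (0:ℝ) ≤ ((2:ℝ)^(-α))^j := by positivity
          exact mul_le_mul_of_nonneg_right
            (mul_le_mul_of_nonneg_left hmono (Real.rpow_nonneg two_pos.le α)) hnn
        calc ENNReal.ofReal ((2:ℝ)^α * ((2:ℝ)^(-m))^α * ((2:ℝ)^(-α))^j)
            ≤ ENNReal.ofReal (((2:ℝ)^α * (2*r)^α) * ((2:ℝ)^(-α))^j) :=
              ENNReal.ofReal_le_ofReal hle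
          _ = ENNReal.ofReal ((2:ℝ)^α * (2*r)^α) * (ENNReal.ofReal ((2:ℝ)^(-α)))^j := by
              rw [ENNReal.ofReal_mul (by positivity), ENNReal.ofReal_pow (by positivity)]
      · simp
    calc ∑' j : ℕ, w (m + (j:ℤ))
        ≤ ∑' j : ℕ, ENNReal.ofReal ((2:ℝ)^α * (2*r)^α) * (ENNReal.ofReal ((2:ℝ)^(-α)))^j :=
          ENNReal.tsum_le_tsum hterm
      _ = ENNReal.ofReal ((2:ℝ)^α * (2*r)^α) * (1 - ENNReal.ofReal ((2:ℝ)^(-α)))⁻¹ := by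
          rw [ENNReal.tsum_mul_left, ENNReal.tsum_geometric]
      _ = ENNReal.ofReal ((2:ℝ)^α * (2*r)^α / (1 - 2^(-α))) := by
          rw [ENNReal.ofReal_div_of_pos h2α0, ENNReal.ofReal_sub _ (by positivity),
            ENNReal.ofReal_one, div_eq_mul_inv]
  -- volume identities
  have hμB_eq : μB = ENNReal.ofReal (r^n) * V := by
    haveI : Nonempty (Fin n) := ⟨⟨0, by omega⟩⟩
    haveI : Nontrivial (EuclideanSpace ℝ (Fin n)) := inferInstance
    rw [hμB_def, hB_def, Measure.addHaar_ball volume x₀ hr.le, hV_def]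
    congr 2
    simp [finrank_euclideanSpace]
  have hrn0 : ENNReal.ofReal (r^n) ≠ 0 := (ENNReal.ofReal_pos.mpr (by positivity)).ne'
  have hsplit : μB ^ (-(α/(n:ℝ))) = ENNReal.ofReal (r ^ (-α)) * ENNReal.ofReal Ve := by
    rw [hμB_eq, ENNReal.mul_rpow_of_ne_zero hrn0 hV0]
    congr 1
    · rw [ENNReal.ofReal_rpow_of_pos (by positivity)]
      congr 1
      rw [← Real.rpow_natCast r n, ← Real.rpow_mul hr.le]
      congr 1
      field_simp
    · have hne : V ^ (-(α/(n:ℝ))) ≠ ⊤ := by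
        rw [ENNReal.rpow_neg]
        exact ENNReal.inv_ne_top.mpr
          (ENNReal.rpow_pos (pos_iff_ne_zero.mpr hV0) hVt).ne'
      rw [hVe_def, ENNReal.toReal_rpow, ENNReal.ofReal_toReal hne]
  have hexp : μB ^ ((2:ℝ) - α/(n:ℝ)) = μB ^ (-(α/(n:ℝ))) * μB ^ 2 := by
    rw [← ENNReal.rpow_natCast μB 2, ← ENNReal.rpow_add _ _ hB0 hBt]
    congr 1
    push_cast
    ring
  -- the constant comparison
  have hconst : ENNReal.ofReal ((2:ℝ)^α * (2*r)^α / (1 - 2^(-α))) * 2 *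
      (ENNReal.ofReal (r ^ (-α)) * ENNReal.ofReal Ve)
      ≤ ENNReal.ofReal (2 ^ (2*α+1) * Ve / (1 - 2 ^ (-α))) := by
    rw [show (2:ℝ≥0∞) = ENNReal.ofReal 2 by simp,
      ← ENNReal.ofReal_mul (by positivity), ← ENNReal.ofReal_mul (by positivity),
      ← ENNReal.ofReal_mul (by positivity)]
    apply ENNReal.ofReal_le_ofReal
    have h1 : ((2:ℝ)*r)^α = 2^α * r^α := Real.mul_rpow two_pos.le hr.le
    have h2 : (r:ℝ)^α * r^(-α) = 1 := by
      rw [← Real.rpow_add hr]; simp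
    have h3 : (2:ℝ)^α * 2^α * 2 = 2^(2*α+1) := by
      calc (2:ℝ)^α * 2^α * 2 = 2^(α+α) * 2^(1:ℝ) := by
            rw [← Real.rpow_add two_pos, Real.rpow_one]
        _ = 2^(2*α+1) := by rw [← Real.rpow_add two_pos]; ring_nf
    calc (2:ℝ)^α * (2*r)^α / (1 - 2^(-α)) * 2 * (r^(-α) * Ve)
        = ((2:ℝ)^α * 2^α * 2) * (r^α * r^(-α)) * Ve / (1 - 2^(-α)) := by
          rw [h1]; ring
      _ = 2^(2*α+1) * Ve / (1 - 2^(-α)) := by rw [h2, h3]; ring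
      _ ≤ 2^(2*α+1) * Ve / (1 - 2^(-α)) := le_rfl
  -- put everything together
  apply ENNReal.div_le_of_le_mul
  calc (∑' k : ℤ, ∫⁻ x in B,
        ∫⁻ y in B ∩ {y : EuclideanSpace ℝ (Fin n) |
            (2 : ℝ) ^ (-k) ≤ dist x y ∧ dist x y < (2 : ℝ) ^ (-k + 1)},
          ENNReal.ofReal ((g k x + g k y) * ‖x - y‖ ^ α))
      ≤ (∑' k : ℤ, w k) * (2 * (S * μB ^ ((2:ℝ) - α/(n:ℝ)))) := by
        rw [← ENNReal.tsum_mul_right]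
        exact ENNReal.tsum_le_tsum hT
    _ ≤ ENNReal.ofReal ((2:ℝ)^α * (2*r)^α / (1 - 2^(-α))) *
          (2 * (S * μB ^ ((2:ℝ) - α/(n:ℝ)))) := mul_le_mul_left hW _
    _ = (ENNReal.ofReal ((2:ℝ)^α * (2*r)^α / (1 - 2^(-α))) * 2 *
          (ENNReal.ofReal (r ^ (-α)) * ENNReal.ofReal Ve) * S) * μB ^ 2 := by
        rw [hexp, hsplit]; ring
    _ ≤ (ENNReal.ofReal (2 ^ (2*α+1) * Ve / (1 - 2 ^ (-α))) * S) * μB ^ 2 := by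
        exact mul_le_mul_left (mul_le_mul_left hconst S) _
end
end
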